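/- arXiv:1312.4349 — 3 statements merged into one kernel-verified Lean document; each statement's English description precedes it below -/
import Mathlib

section
/- Let F be a convex class of functions bounded by b with |Y| ≤ b a.s., f* a minimizer of the squared risk over F, and L_f the excess loss of f relative to f*. Then every f ∈ F satisfies the Bernstein condition E[L_f²] ≤ (4b)² · E[L_f]. -/
open MeasureTheory

/-!
Write `u = Y - f* ∘ X` and `v = f ∘ X - f* ∘ X`, so that `L_f = (u - v)² - u² = v² - 2 v u`.
Since `f* + θ (f - f*) ∈ F` for `θ ∈ [0, 1]`, minimality of `f*` gives
`E u² ≤ E (u - θ v)² = E u² - 2 θ E[v u] + θ² E v²`; letting `θ → 0` yields `E[v u] ≤ 0`,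
hence `E L_f ≥ E v²`. On the other hand `L_f = v (v - 2u)` with `|v - 2u| = |f + f* - 2Y| ≤ 4b`,
so `E L_f² ≤ (4b)² E v²`.
-/

lemma nonpos_of_forall_two_mul_le_sq_mul {a c : ℝ}
    (h : ∀ θ : ℝ, 0 < θ → θ ≤ 1 → 2 * θ * a ≤ θ ^ 2 * c) : a ≤ 0 := by
  by_contra! ha
  set θ := min 1 (a / (|c| + 1))
  have hθ : 0 < θ := lt_min one_pos (by positivity)
  have hθa : θ * (|c| + 1) ≤ a := (le_div_iff₀ (by positivity)).1 (min_le_right _ _)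
  have hθc : 2 * a ≤ θ * c := by
    have := h θ hθ (min_le_left _ _)
    nlinarith
  nlinarith [le_abs_self c]

lemma sq_sub_sq_sub_sq_le {y s t b : ℝ} (hy : |y| ≤ b) (hs : |s| ≤ b) (ht : |t| ≤ b) :
    ((y - s) ^ 2 - (y - t) ^ 2) ^ 2 ≤ (4 * b) ^ 2 * (s - t) ^ 2 := by
  have hsum : (2 * y - s - t) ^ 2 ≤ (4 * b) ^ 2 := by
    apply sq_le_sq' <;>
      linarith [neg_abs_le y, neg_abs_le s, neg_abs_le t, le_abs_self y, le_abs_self s,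
        le_abs_self t]
  calc ((y - s) ^ 2 - (y - t) ^ 2) ^ 2 = (s - t) ^ 2 * (2 * y - s - t) ^ 2 := by ring
    _ ≤ (s - t) ^ 2 * (4 * b) ^ 2 := by gcongr
    _ = (4 * b) ^ 2 * (s - t) ^ 2 := by ring

section SquareLoss

variable {Ω : Type*} [MeasurableSpace Ω] {μ : Measure Ω} {u v : Ω → ℝ}

lemma integral_sub_mul_sq (hu : MemLp u 2 μ) (hv : MemLp v 2 μ) (θ : ℝ) :
    ∫ ω, (u ω - θ * v ω) ^ 2 ∂μ
      = ∫ ω, u ω ^ 2 ∂μ - 2 * θ * ∫ ω, v ω * u ω ∂μ + θ ^ 2 * ∫ ω, v ω ^ 2 ∂μ := by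
  have hvu : Integrable (fun ω => v ω * u ω) μ := hv.integrable_mul hu
  have hlin : Integrable (fun ω => u ω ^ 2 - 2 * θ * (v ω * u ω)) μ :=
    hu.integrable_sq.sub (hvu.const_mul _)
  calc ∫ ω, (u ω - θ * v ω) ^ 2 ∂μ
      = ∫ ω, (u ω ^ 2 - 2 * θ * (v ω * u ω) + θ ^ 2 * v ω ^ 2) ∂μ := by
        congr 1; ext ω; ring
    _ = _ := by
      rw [integral_add hlin (hv.integrable_sq.const_mul _),
        integral_sub hu.integrable_sq (hvu.const_mul _), integral_const_mul, integral_const_mul]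

lemma integral_mul_nonpos_of_forall_integral_sq_le (hu : MemLp u 2 μ) (hv : MemLp v 2 μ)
    (hmin : ∀ θ : ℝ, 0 < θ → θ ≤ 1 → ∫ ω, u ω ^ 2 ∂μ ≤ ∫ ω, (u ω - θ * v ω) ^ 2 ∂μ) :
    ∫ ω, v ω * u ω ∂μ ≤ 0 :=
  nonpos_of_forall_two_mul_le_sq_mul fun θ hθ0 hθ1 => by
    have := hmin θ hθ0 hθ1
    rw [integral_sub_mul_sq hu hv] at this
    linarith

lemma integral_sub_sq_sub_sq (hu : MemLp u 2 μ) (hv : MemLp v 2 μ) :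
    ∫ ω, ((u ω - v ω) ^ 2 - u ω ^ 2) ∂μ = ∫ ω, v ω ^ 2 ∂μ - 2 * ∫ ω, v ω * u ω ∂μ := by
  have huv : Integrable (fun ω => (u ω - v ω) ^ 2) μ := (hu.sub hv).integrable_sq
  have h := integral_sub_mul_sq hu hv 1
  simp only [one_mul, mul_one, one_pow] at h
  rw [integral_sub huv hu.integrable_sq, h]
  ring

lemma integral_sq_sub_sq_sub_sq_le {y s t : Ω → ℝ} {b : ℝ} (hy : ∀ᵐ ω ∂μ, |y ω| ≤ b)
    (hs : ∀ᵐ ω ∂μ, |s ω| ≤ b) (ht : ∀ᵐ ω ∂μ, |t ω| ≤ b)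
    (hst : Integrable (fun ω => (s ω - t ω) ^ 2) μ) :
    ∫ ω, ((y ω - s ω) ^ 2 - (y ω - t ω) ^ 2) ^ 2 ∂μ ≤ (4 * b) ^ 2 * ∫ ω, (s ω - t ω) ^ 2 ∂μ := by
  rw [← integral_const_mul]
  refine integral_mono_of_nonneg (.of_forall fun ω => sq_nonneg _) (hst.const_mul _) ?_
  filter_upwards [hy, hs, ht] with ω hyω hsω htω
  exact sq_sub_sq_sub_sq_le hyω hsω htω

end SquareLoss

theorem stmt3_general {Ω 𝒳 : Type*} [MeasurableSpace Ω] [MeasurableSpace 𝒳]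
    (μ : Measure Ω) [IsProbabilityMeasure μ]
    (X : Ω → 𝒳) (Y : Ω → ℝ) (hX : Measurable X) (hY : Measurable Y)
    (b : ℝ) (hYb : ∀ᵐ ω ∂μ, |Y ω| ≤ b)
    (F : Set (𝒳 → ℝ)) (hFmeas : ∀ f ∈ F, Measurable f)
    (hFb : ∀ f ∈ F, ∀ᵐ ω ∂μ, |f (X ω)| ≤ b)
    (hconv : ∀ f ∈ F, ∀ g ∈ F, ∀ θ : ℝ, 0 ≤ θ → θ ≤ 1 →
      (fun x => θ * f x + (1 - θ) * g x) ∈ F)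
    (fstar : 𝒳 → ℝ) (hfstar : fstar ∈ F)
    (hmin : ∀ f ∈ F, ∫ ω, (Y ω - fstar (X ω))^2 ∂μ ≤ ∫ ω, (Y ω - f (X ω))^2 ∂μ) :
    ∀ f ∈ F,
      ∫ ω, ((Y ω - f (X ω))^2 - (Y ω - fstar (X ω))^2)^2 ∂μ
        ≤ (4*b)^2 * ∫ ω, ((Y ω - f (X ω))^2 - (Y ω - fstar (X ω))^2) ∂μ := by
  intro f hf
  have memLp_of_bdd : ∀ {w : Ω → ℝ}, Measurable w → (∀ᵐ ω ∂μ, |w ω| ≤ b) → MemLp w 2 μ :=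
    fun hw hwb => MemLp.of_bound hw.aestronglyMeasurable b hwb
  have hf2 : MemLp (fun ω => f (X ω)) 2 μ := memLp_of_bdd ((hFmeas f hf).comp hX) (hFb f hf)
  have hstar2 : MemLp (fun ω => fstar (X ω)) 2 μ :=
    memLp_of_bdd ((hFmeas fstar hfstar).comp hX) (hFb fstar hfstar)
  have hu : MemLp (fun ω => Y ω - fstar (X ω)) 2 μ := (memLp_of_bdd hY hYb).sub hstar2
  have hv : MemLp (fun ω => f (X ω) - fstar (X ω)) 2 μ := hf2.sub hstar2
  have hcross : ∫ ω, (f (X ω) - fstar (X ω)) * (Y ω - fstar (X ω)) ∂μ ≤ 0 :=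
    integral_mul_nonpos_of_forall_integral_sq_le hu hv fun θ hθ0 hθ1 => by
      convert hmin _ (hconv f hf fstar hfstar θ hθ0.le hθ1) using 3 with ω
      ring
  have hmean := integral_sub_sq_sub_sq hu hv
  have hbound := integral_sq_sub_sq_sub_sq_le hYb (hFb f hf) (hFb fstar hfstar) hv.integrable_sq
  simp only [sub_sub_sub_cancel_right] at hmean
  rw [hmean]
  exact hbound.trans (by gcongr; linarith)

/-- Bernstein condition for the excess loss class of a convex class of bounded
functions: E L_f² ≤ (4b)² E L_f. -/
theorem stmt3 {Ω 𝒳 : Type*} [MeasurableSpace Ω] [MeasurableSpace 𝒳]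
    (μ : Measure Ω) [IsProbabilityMeasure μ]
    (X : Ω → 𝒳) (Y : Ω → ℝ) (hX : Measurable X) (hY : Measurable Y)
    (b : ℝ) (hb : 0 ≤ b) (hYb : ∀ᵐ ω ∂μ, |Y ω| ≤ b)
    (F : Set (𝒳 → ℝ)) (hFmeas : ∀ f ∈ F, Measurable f)
    (hFb : ∀ f ∈ F, ∀ᵐ ω ∂μ, |f (X ω)| ≤ b)
    (hconv : ∀ f ∈ F, ∀ g ∈ F, ∀ θ : ℝ, 0 ≤ θ → θ ≤ 1 →
      (fun x => θ * f x + (1 - θ) * g x) ∈ F)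
    (fstar : 𝒳 → ℝ) (hfstar : fstar ∈ F)
    (hmin : ∀ f ∈ F, ∫ ω, (Y ω - fstar (X ω))^2 ∂μ ≤ ∫ ω, (Y ω - f (X ω))^2 ∂μ) :
    ∀ f ∈ F,
      ∫ ω, ((Y ω - f (X ω))^2 - (Y ω - fstar (X ω))^2)^2 ∂μ
        ≤ (4*b)^2 * ∫ ω, ((Y ω - f (X ω))^2 - (Y ω - fstar (X ω))^2) ∂μ :=
  stmt3_general μ X Y hX hY b hYb F hFmeas hFb hconv fstar hfstar hmin
end

section
/- Let G be a star-shaped (at 0) class of functions and suppose that on some event, |Ph - P_n h| ≤ (1/2)ρ for every h ∈ G with Ph ≤ ρ, where ρ > 0. Then on the same event, for every g ∈ G, |Pg - P_n g| ≤ (1/2) max(Pg, ρ). -/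
/-!
If `Pg > ρ`, the rescaled function `h = (ρ / Pg) • g` stays in the star-shaped class and sits
exactly at level `Ph = ρ`. Both `P` and the deviation `P - P_n` are positively homogeneous, so the
localized bound `|Ph - P_n h| ≤ ρ / 2` scales back to `|Pg - P_n g| ≤ Pg / 2`.
-/

open MeasureTheory

section StarConvex

variable {E : Type*} [AddCommGroup E] [Module ℝ E] {G : Set E} {Φ Ψ : E → ℝ} {ρ : ℝ}

lemma abs_le_half_of_rescale (hG : StarConvex ℝ 0 G)
    (hΦ : ∀ g, ∀ a : ℝ, 0 ≤ a → Φ (a • g) = a * Φ g)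
    (hΨ : ∀ g, ∀ a : ℝ, 0 ≤ a → Ψ (a • g) = a * Ψ g)
    (hρ : 0 < ρ) (hloc : ∀ h ∈ G, Φ h ≤ ρ → |Ψ h| ≤ ρ / 2)
    {g : E} (hg : g ∈ G) (hgρ : ρ < Φ g) :
    |Ψ g| ≤ Φ g / 2 := by
  have hΦg : 0 < Φ g := hρ.trans hgρ
  set α := ρ / Φ g
  have hα : 0 < α := div_pos hρ hΦg
  have hmem : α • g ∈ G := hG.smul_mem hg hα.le ((div_le_one hΦg).mpr hgρ.le)
  have hlevel : Φ (α • g) = ρ := by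
    rw [hΦ g α hα.le, div_mul_cancel₀ _ hΦg.ne']
  have hscaled : α * |Ψ g| ≤ α * (Φ g / 2) := by
    calc α * |Ψ g| = |Ψ (α • g)| := by rw [hΨ g α hα.le, abs_mul, abs_of_pos hα]
      _ ≤ ρ / 2 := hloc _ hmem hlevel.le
      _ = α * (Φ g / 2) := by rw [← hlevel, hΦ g α hα.le]; ring
  exact le_of_mul_le_mul_left hscaled hα

theorem abs_le_half_max_of_localized (hG : StarConvex ℝ 0 G)
    (hΦ : ∀ g, ∀ a : ℝ, 0 ≤ a → Φ (a • g) = a * Φ g)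
    (hΨ : ∀ g, ∀ a : ℝ, 0 ≤ a → Ψ (a • g) = a * Ψ g)
    (hρ : 0 < ρ) (hloc : ∀ h ∈ G, Φ h ≤ ρ → |Ψ h| ≤ ρ / 2) :
    ∀ g ∈ G, |Ψ g| ≤ 1 / 2 * max (Φ g) ρ := by
  intro g hg
  rcases le_or_gt (Φ g) ρ with hgρ | hgρ
  · have := le_max_right (Φ g) ρ
    linarith [hloc g hg hgρ]
  · have := le_max_left (Φ g) ρ
    linarith [abs_le_half_of_rescale hG hΦ hΨ hρ hloc hg hgρ]

end StarConvex

theorem stmt5_general {𝒵 : Type*} [MeasurableSpace 𝒵] (ν : Measure 𝒵)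
    (n : ℕ) (z : Fin n → 𝒵)
    (G : Set (𝒵 → ℝ))
    (hstar : ∀ g ∈ G, ∀ α : ℝ, 0 ≤ α → α ≤ 1 → (fun t => α * g t) ∈ G)
    (ρ : ℝ) (hρ : 0 < ρ)
    (hiso : ∀ h ∈ G, (∫ t, h t ∂ν) ≤ ρ →
      |(∫ t, h t ∂ν) - (1/n : ℝ) * ∑ i, h (z i)| ≤ ρ/2) :
    ∀ g ∈ G, |(∫ t, g t ∂ν) - (1/n : ℝ) * ∑ i, g (z i)|
      ≤ (1/2) * max (∫ t, g t ∂ν) ρ := by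
  have hG : StarConvex ℝ 0 G := starConvex_zero_iff.mpr fun g hg _ ha0 ha1 => hstar g hg _ ha0 ha1
  have hP (g : 𝒵 → ℝ) (a : ℝ) : ∫ t, (a • g) t ∂ν = a * ∫ t, g t ∂ν := integral_smul a g
  have hPn (g : 𝒵 → ℝ) (a : ℝ) :
      (1/n : ℝ) * ∑ i, (a • g) (z i) = a * ((1/n : ℝ) * ∑ i, g (z i)) := by
    simp only [Pi.smul_apply, smul_eq_mul, ← Finset.mul_sum]
    ring
  exact abs_le_half_max_of_localized hG (fun g a _ => hP g a)
    (fun g a _ => by rw [hP, hPn, mul_sub]) hρ hiso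

/-- If on a given sample the deviations are at most ρ/2 on the ρ-localized part of a
star-shaped class G, then for every g ∈ G, |Pg - P_n g| ≤ (1/2) max(Pg, ρ). -/
theorem stmt5 {𝒵 : Type*} [MeasurableSpace 𝒵] (ν : Measure 𝒵) [IsProbabilityMeasure ν]
    (n : ℕ) (hn : 0 < n) (z : Fin n → 𝒵)
    (G : Set (𝒵 → ℝ)) (hGint : ∀ g ∈ G, Integrable g ν)
    (hstar : ∀ g ∈ G, ∀ α : ℝ, 0 ≤ α → α ≤ 1 → (fun t => α * g t) ∈ G)
    (hpos : ∀ g ∈ G, 0 ≤ ∫ t, g t ∂ν)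
    (ρ : ℝ) (hρ : 0 < ρ)
    (hiso : ∀ h ∈ G, (∫ t, h t ∂ν) ≤ ρ →
      |(∫ t, h t ∂ν) - (1/n : ℝ) * ∑ i, h (z i)| ≤ ρ/2) :
    ∀ g ∈ G, |(∫ t, g t ∂ν) - (1/n : ℝ) * ∑ i, g (z i)|
      ≤ (1/2) * max (∫ t, g t ∂ν) ρ :=
  stmt5_general ν n z G hstar ρ hρ hiso
end

section
/- Maurey's empirical method bound: Let F = {f_1,…,f_M} be functions with |f_j(X)| ≤ b a.s., |Y| ≤ b a.s., and let C = conv(F) and C' = {(1/m) Σ_{i=1}^m h_i : h_1,…,h_m ∈ F}. Then min_{f ∈ C'} R(f) ≤ min_{f ∈ C} R(f) + 4b²/m, where R(f) = E(Y - f(X))². -/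
/-!
Maurey's empirical method. Write `g = ∑ⱼ wⱼ fⱼ` and draw `Θ₁, …, Θₘ` independently from `F` with
`P(Θ = fⱼ) = wⱼ`. Pointwise, `Y - m⁻¹ ∑ₖ Θₖ(X)` has mean `Y - g(X)` and variance
`Var_w(f(X)) / m ≤ (2b)² / m`, so the expected risk of the empirical average is at most
`R(g) + 4b²/m`, and some realisation `(Θ₁, …, Θₘ) = (f_{h 1}, …, f_{h m})` does at least as well.
The expectation over the draws is the finite sum over `h : Fin m → Fin M` with weights
`∏ₖ w (h k)`.
-/

open MeasureTheory Finset

theorem exists_weights_of_mem_convexHull_range {𝕜 ι E : Type*} [Field 𝕜] [LinearOrder 𝕜]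
    [IsStrictOrderedRing 𝕜] [Fintype ι] [AddCommGroup E] [Module 𝕜 E] {v : ι → E} {x : E}
    (hx : x ∈ convexHull 𝕜 (Set.range v)) :
    ∃ w : ι → 𝕜, (∀ i, 0 ≤ w i) ∧ ∑ i, w i = 1 ∧ ∑ i, w i • v i = x := by
  classical
  have hv : Set.range v = Fintype.linearCombination 𝕜 v '' Set.range fun i ↦ Pi.single i 1 := by
    rw [← Set.range_comp]; congr! 1; ext i
    simp [Fintype.linearCombination_apply, Pi.single_apply]
  rw [hv, ← LinearMap.image_convexHull, convexHull_rangle_single_eq_stdSimplex] at hx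
  obtain ⟨w, ⟨hw0, hw1⟩, rfl⟩ := hx
  exact ⟨w, hw0, hw1, (Fintype.linearCombination_apply 𝕜 v w).symm⟩

theorem exists_le_sum_mul_of_sum_eq_one {ι R : Type*} [CommRing R] [LinearOrder R]
    [IsStrictOrderedRing R] {s : Finset ι} {w : ι → R} (r : ι → R)
    (hw0 : ∀ i ∈ s, 0 ≤ w i) (hw1 : ∑ i ∈ s, w i = 1) :
    ∃ i ∈ s, r i ≤ ∑ j ∈ s, w j * r j := by
  obtain ⟨i, hi, hmin⟩ := s.exists_min_image r (nonempty_of_sum_ne_zero (f := w) (by simp [hw1]))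
  refine ⟨i, hi, ?_⟩
  calc r i = ∑ j ∈ s, w j * r i := by rw [← sum_mul, hw1, one_mul]
    _ ≤ ∑ j ∈ s, w j * r j := sum_le_sum fun j hj ↦ mul_le_mul_of_nonneg_left (hmin j hj) (hw0 j hj)

theorem abs_sum_mul_le_of_sum_eq_one {ι 𝕜 : Type*} [Field 𝕜] [LinearOrder 𝕜]
    [IsStrictOrderedRing 𝕜] {s : Finset ι} {w a : ι → 𝕜} {b : 𝕜}
    (hw0 : ∀ i ∈ s, 0 ≤ w i) (hw1 : ∑ i ∈ s, w i = 1) (ha : ∀ i ∈ s, |a i| ≤ b) :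
    |∑ i ∈ s, w i * a i| ≤ b :=
  abs_le.2 ((convex_Icc (-b) b).sum_mem hw0 hw1 fun i hi ↦ abs_le.1 (ha i hi))

theorem integrable_sq_sub_of_abs_le {Ω : Type*} [MeasurableSpace Ω] {μ : Measure Ω}
    [IsFiniteMeasure μ] {U V : Ω → ℝ} {b : ℝ} (hU : AEStronglyMeasurable U μ)
    (hV : AEStronglyMeasurable V μ) (hUb : ∀ᵐ ω ∂μ, |U ω| ≤ b) (hVb : ∀ᵐ ω ∂μ, |V ω| ≤ b) :
    Integrable (fun ω ↦ (U ω - V ω) ^ 2) μ := by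
  refine Integrable.of_bound ((hU.sub hV).pow 2) ((b + b) ^ 2) ?_
  filter_upwards [hUb, hVb] with ω hUω hVω
  rw [Real.norm_eq_abs, abs_pow, sq_le_sq₀ (abs_nonneg _) (by linarith [abs_nonneg (U ω)])]
  exact (abs_sub _ _).trans (add_le_add hUω hVω)

section ProductWeights

variable {ι : Type*} [Fintype ι] {p : ι → ℝ}

theorem sum_pi_prod_eq_one (hp1 : ∑ i, p i = 1) (m : ℕ) : ∑ h : Fin m → ι, ∏ k, p (h k) = 1 := by
  rw [← Fintype.prod_sum, hp1, prod_const_one]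

theorem sum_pi_fin_succ {M : Type*} [AddCommMonoid M] (m : ℕ) (F : (Fin (m + 1) → ι) → M) :
    ∑ h, F h = ∑ j, ∑ h : Fin m → ι, F (Fin.cons j h) := by
  rw [← Fintype.sum_prod_type']
  exact (Fintype.sum_equiv (Fin.consEquiv fun _ ↦ ι) _ _ fun _ ↦ rfl).symm

/-- The sum of `m` independent draws from `p` has mean `m ā` and variance `m Var_p(a)`. -/
theorem sum_prod_mul_sq_sub_sum (hp1 : ∑ i, p i = 1) (a : ι → ℝ) (m : ℕ) (c : ℝ) :
    ∑ h : Fin m → ι, (∏ k, p (h k)) * (c - ∑ k, a (h k)) ^ 2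
      = (c - m * ∑ i, p i * a i) ^ 2 + m * ∑ i, p i * (a i - ∑ j, p j * a j) ^ 2 := by
  set abar := ∑ i, p i * a i
  induction m generalizing c with
  | zero => simp
  | succ m ih =>
    have hcenter : ∑ i, p i * (a i - abar) = 0 := by
      simp only [mul_sub, sum_sub_distrib, ← sum_mul, hp1, one_mul, sub_self, abar]
    set V := ∑ i, p i * (a i - abar) ^ 2
    calc ∑ h : Fin (m + 1) → ι, (∏ k, p (h k)) * (c - ∑ k, a (h k)) ^ 2
        = ∑ j, p j * ∑ h : Fin m → ι, (∏ k, p (h k)) * (c - a j - ∑ k, a (h k)) ^ 2 := by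
          simp only [sum_pi_fin_succ, Fin.prod_univ_succ, Fin.sum_univ_succ, Fin.cons_zero,
            Fin.cons_succ, mul_sum]
          congr! 2 with j - h
          ring
      _ = ∑ j, (p j * (c - (m + 1) * abar) ^ 2 - 2 * (c - (m + 1) * abar) * (p j * (a j - abar))
            + p j * (a j - abar) ^ 2 + m * p j * V) := by
          congr! 1 with j
          rw [ih]
          ring
      _ = (c - ↑(m + 1) * abar) ^ 2 + ↑(m + 1) * V := by
          simp only [sum_add_distrib, sum_sub_distrib, ← sum_mul, ← mul_sum, hp1, hcenter]
          push_cast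
          ring


theorem sum_prod_mul_sq_sub_avg_le {m : ℕ} (hm : 0 < m) (hp0 : ∀ i, 0 ≤ p i)
    (hp1 : ∑ i, p i = 1) {a : ι → ℝ} {b : ℝ} (ha : ∀ i, |a i| ≤ b) (t : ℝ) :
    ∑ h : Fin m → ι, (∏ k, p (h k)) * (t - (1 / m : ℝ) * ∑ k, a (h k)) ^ 2
      ≤ (t - ∑ i, p i * a i) ^ 2 + 4 * b ^ 2 / m := by
  set abar := ∑ i, p i * a i
  have hm' : (m : ℝ) ≠ 0 := by positivity
  have habar : |abar| ≤ b := abs_sum_mul_le_of_sum_eq_one (fun i _ ↦ hp0 i) hp1 fun i _ ↦ ha i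
  have hvar : ∑ i, p i * (a i - abar) ^ 2 ≤ 4 * b ^ 2 := by
    calc ∑ i, p i * (a i - abar) ^ 2 ≤ ∑ i, p i * (2 * b) ^ 2 := by
          refine sum_le_sum fun i _ ↦ mul_le_mul_of_nonneg_left ?_ (hp0 i)
          obtain ⟨hai, hai'⟩ := abs_le.1 (ha i)
          obtain ⟨hab, hab'⟩ := abs_le.1 habar
          exact sq_le_sq' (by linarith) (by linarith)
      _ = 4 * b ^ 2 := by rw [← sum_mul, hp1]; ring
  calc ∑ h : Fin m → ι, (∏ k, p (h k)) * (t - (1 / m : ℝ) * ∑ k, a (h k)) ^ 2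
      = (1 / m : ℝ) ^ 2 * ∑ h : Fin m → ι, (∏ k, p (h k)) * (m * t - ∑ k, a (h k)) ^ 2 := by
        rw [mul_sum]; congr! 1 with h; field_simp
    _ = (t - abar) ^ 2 + (∑ i, p i * (a i - abar) ^ 2) / m := by
        rw [sum_prod_mul_sq_sub_sum hp1]; field_simp; ring
    _ ≤ (t - abar) ^ 2 + 4 * b ^ 2 / m := by gcongr

end ProductWeights

section Risk

variable {Ω 𝒳 ι : Type*} [MeasurableSpace Ω] [MeasurableSpace 𝒳] [Fintype ι] {μ : Measure Ω}
  [IsProbabilityMeasure μ] {X : Ω → 𝒳} {Y : Ω → ℝ} {b : ℝ} {f : ι → 𝒳 → ℝ}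

theorem integrable_sq_sub_sum_mul (hX : Measurable X) (hY : Measurable Y)
    (hfm : ∀ i, Measurable (f i)) (hYb : ∀ᵐ ω ∂μ, |Y ω| ≤ b)
    (hfb : ∀ i, ∀ᵐ ω ∂μ, |f i (X ω)| ≤ b) {w : ι → ℝ} (hw0 : ∀ i, 0 ≤ w i)
    (hw1 : ∑ i, w i = 1) :
    Integrable (fun ω ↦ (Y ω - ∑ i, w i * f i (X ω)) ^ 2) μ := by
  refine integrable_sq_sub_of_abs_le hY.aestronglyMeasurable
    (by fun_prop : Measurable fun ω ↦ ∑ i, w i * f i (X ω)).aestronglyMeasurable hYb ?_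
  filter_upwards [ae_all_iff.2 hfb] with ω hω
  exact abs_sum_mul_le_of_sum_eq_one (fun i _ ↦ hw0 i) hw1 fun i _ ↦ hω i

theorem sum_prod_mul_integral_sq_sub_avg_le {m : ℕ} (hm : 0 < m) (hX : Measurable X)
    (hY : Measurable Y) (hfm : ∀ i, Measurable (f i)) (hYb : ∀ᵐ ω ∂μ, |Y ω| ≤ b)
    (hfb : ∀ i, ∀ᵐ ω ∂μ, |f i (X ω)| ≤ b) {w : ι → ℝ} (hw0 : ∀ i, 0 ≤ w i)
    (hw1 : ∑ i, w i = 1) :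
    ∑ h : Fin m → ι, (∏ k, w (h k)) * ∫ ω, (Y ω - (1 / m : ℝ) * ∑ k, f (h k) (X ω)) ^ 2 ∂μ
      ≤ (∫ ω, (Y ω - ∑ i, w i * f i (X ω)) ^ 2 ∂μ) + 4 * b ^ 2 / m := by
  have hint_avg (h : Fin m → ι) :
      Integrable (fun ω ↦ (Y ω - (1 / m : ℝ) * ∑ k, f (h k) (X ω)) ^ 2) μ := by
    simpa only [mul_sum] using integrable_sq_sub_sum_mul (f := fun k ↦ f (h k)) hX hY
      (fun k ↦ hfm (h k)) hYb (fun k ↦ hfb (h k)) (fun _ ↦ by positivity)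
      (by simp [(Nat.cast_pos.2 hm).ne'])
  have hint := integrable_sq_sub_sum_mul hX hY hfm hYb hfb hw0 hw1
  calc _ = ∫ ω, ∑ h : Fin m → ι, (∏ k, w (h k)) *
          (Y ω - (1 / m : ℝ) * ∑ k, f (h k) (X ω)) ^ 2 ∂μ := by
        rw [integral_finsetSum _ fun h _ ↦ (hint_avg h).const_mul _]
        simp only [integral_const_mul]
    _ ≤ ∫ ω, ((Y ω - ∑ i, w i * f i (X ω)) ^ 2 + 4 * b ^ 2 / m) ∂μ := by
        refine integral_mono_ae (integrable_finsetSum _ fun h _ ↦ (hint_avg h).const_mul _)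
          (hint.add (integrable_const _)) ?_
        filter_upwards [ae_all_iff.2 hfb] with ω hω
        exact sum_prod_mul_sq_sub_avg_le hm hw0 hw1 hω (Y ω)
    _ = _ := by rw [integral_add hint (integrable_const _)]; simp

end Risk

theorem stmt9_general {Ω 𝒳 : Type*} [MeasurableSpace Ω] [MeasurableSpace 𝒳]
    (μ : Measure Ω) [IsProbabilityMeasure μ]
    (X : Ω → 𝒳) (Y : Ω → ℝ) (hX : Measurable X) (hY : Measurable Y)
    (b : ℝ) (hYb : ∀ᵐ ω ∂μ, |Y ω| ≤ b)
    (M : ℕ) (f : Fin M → 𝒳 → ℝ) (hfm : ∀ j, Measurable (f j))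
    (hfb : ∀ j, ∀ᵐ ω ∂μ, |f j (X ω)| ≤ b)
    (m : ℕ) (hm : 0 < m) :
    ∀ g ∈ convexHull ℝ (Set.range f),
      ∃ h : Fin m → Fin M,
        (∫ ω, (Y ω - (1/m : ℝ) * ∑ i, f (h i) (X ω))^2 ∂μ)
          ≤ (∫ ω, (Y ω - g (X ω))^2 ∂μ) + 4 * b^2 / m := by
  intro g hg
  obtain ⟨w, hw0, hw1, rfl⟩ := exists_weights_of_mem_convexHull_range hg
  obtain ⟨h, -, hh⟩ := exists_le_sum_mul_of_sum_eq_one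
    (fun h : Fin m → Fin M ↦ ∫ ω, (Y ω - (1 / m : ℝ) * ∑ i, f (h i) (X ω)) ^ 2 ∂μ)
    (fun h _ ↦ prod_nonneg fun k _ ↦ hw0 (h k)) (sum_pi_prod_eq_one hw1 m)
  refine ⟨h, hh.trans ?_⟩
  simpa only [Finset.sum_apply, Pi.smul_apply, smul_eq_mul] using
    sum_prod_mul_integral_sq_sub_avg_le hm hX hY hfm hYb hfb hw0 hw1

/-- Maurey's empirical method bound: min_{f ∈ C'} R(f) ≤ min_{f ∈ conv(F)} R(f) + 4b²/m,
stated as: for every g in the convex hull, some m-term uniform average of dictionary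
elements has risk at most R(g) + 4b²/m. -/
theorem stmt9 {Ω 𝒳 : Type*} [MeasurableSpace Ω] [MeasurableSpace 𝒳]
    (μ : Measure Ω) [IsProbabilityMeasure μ]
    (X : Ω → 𝒳) (Y : Ω → ℝ) (hX : Measurable X) (hY : Measurable Y)
    (b : ℝ) (hb : 0 ≤ b) (hYb : ∀ᵐ ω ∂μ, |Y ω| ≤ b)
    (M : ℕ) (f : Fin M → 𝒳 → ℝ) (hfm : ∀ j, Measurable (f j))
    (hfb : ∀ j, ∀ᵐ ω ∂μ, |f j (X ω)| ≤ b)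
    (m : ℕ) (hm : 0 < m) :
    ∀ g ∈ convexHull ℝ (Set.range f),
      ∃ h : Fin m → Fin M,
        (∫ ω, (Y ω - (1/m : ℝ) * ∑ i, f (h i) (X ω))^2 ∂μ)
          ≤ (∫ ω, (Y ω - g (X ω))^2 ∂μ) + 4 * b^2 / m :=
  stmt9_general μ X Y hX hY b hYb M f hfm hfb m hm
end
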